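/- Fix i ∈ {1,…,n} with β_i = 0, E[x_i(z)] = 0, Var[x_i(z)] > 0 under D, and |x_i(z)| ≤ 1 for all z ∈ {-1,1}^m. Then the individual estimator τ̂_i(z) = 2 Y_i(z)(x_i(z) − E[x_i])/Var[x_i] satisfies Var(τ̂_i) ≤ 4 μ_i² (1/Var[x_i] − 1). -/

import Mathlib

/-!
The exposure is centred, so `τ̂_i = (2 μ_i / Var x_i) · x_i²` and
`Var τ̂_i = (2 μ_i / Var x_i)² · Var(x_i²)`. Since `|x_i| ≤ 1`, the variable `g = x_i²` satisfies
`g² ≤ g`, whence `Var g = E g² - (E g)² ≤ E g (1 - E g)`, and `E g = Var x_i`.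
-/

open Finset Matrix

/-- The sign map from Booleans to `{-1, 1} ⊆ ℝ`. -/
def sgn (b : Bool) : ℝ := if b then 1 else -1

/-- Expectation of `f` under the (finitely supported) design `D`. -/
noncomputable def pexp {α : Type*} [Fintype α] (D f : α → ℝ) : ℝ :=
  ∑ ω, D ω * f ω

/-- Variance of `f` under the design `D`. -/
noncomputable def pvar {α : Type*} [Fintype α] (D f : α → ℝ) : ℝ :=
  pexp D (fun ω => (f ω - pexp D f) ^ 2)

/-- Covariance of `f` and `g` under the design `D`. -/
noncomputable def pcov {α : Type*} [Fintype α] (D f g : α → ℝ) : ℝ :=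
  pexp D (fun ω => (f ω - pexp D f) * (g ω - pexp D g))

section Moments

variable {α : Type*} [Fintype α] (D : α → ℝ)

lemma pexp_const_mul (c : ℝ) (f : α → ℝ) : pexp D (fun ω => c * f ω) = c * pexp D f := by
  simp only [pexp, mul_sum]
  exact sum_congr rfl fun ω _ => by ring

lemma pexp_mono {f g : α → ℝ} (hD0 : ∀ ω, 0 ≤ D ω) (hfg : ∀ ω, f ω ≤ g ω) :
    pexp D f ≤ pexp D g :=
  sum_le_sum fun ω _ => mul_le_mul_of_nonneg_left (hfg ω) (hD0 ω)

lemma pvar_const_mul (c : ℝ) (f : α → ℝ) : pvar D (fun ω => c * f ω) = c ^ 2 * pvar D f := by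
  rw [pvar, pvar, pexp_const_mul D c f, ← pexp_const_mul D (c ^ 2)]
  congr 1
  funext ω
  ring

lemma pexp_sq_sub (f : α → ℝ) (e : ℝ) :
    pexp D (fun ω => (f ω - e) ^ 2)
      = pexp D (fun ω => f ω ^ 2) - 2 * e * pexp D f + e ^ 2 * ∑ ω, D ω := by
  simp only [pexp, mul_sum, ← sum_sub_distrib, ← sum_add_distrib]
  exact sum_congr rfl fun ω _ => by ring

lemma pvar_eq_pexp_sq_sub_sq (hD1 : ∑ ω, D ω = 1) (f : α → ℝ) :
    pvar D f = pexp D (fun ω => f ω ^ 2) - pexp D f ^ 2 := by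
  rw [pvar, pexp_sq_sub, hD1]
  ring

lemma pvar_eq_pexp_sq_of_pexp_eq_zero {f : α → ℝ} (hf : pexp D f = 0) :
    pvar D f = pexp D (fun ω => f ω ^ 2) := by
  simp only [pvar, hf, sub_zero]

/-- Bhatia–Davis bound for a variable with values in `[0, 1]`, i.e. with `g² ≤ g`. -/
lemma pvar_le_pexp_mul_one_sub (hD0 : ∀ ω, 0 ≤ D ω) (hD1 : ∑ ω, D ω = 1) {g : α → ℝ}
    (hg : ∀ ω, g ω ^ 2 ≤ g ω) : pvar D g ≤ pexp D g * (1 - pexp D g) := by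
  have := pexp_mono D hD0 hg
  rw [pvar_eq_pexp_sq_sub_sq D hD1]
  linarith

end Moments

theorem erl_individual_variance_bound_zero_intercept_general
    (m : ℕ)
    (D : (Fin m → Bool) → ℝ) (hD0 : ∀ ω, 0 ≤ D ω) (hD1 : ∑ ω, D ω = 1)
    (μi βi : ℝ)
    (hβi : βi = 0)
    (x : (Fin m → Bool) → ℝ)
    (hmean : pexp D x = 0)
    (hvar : 0 < pvar D x)
    (hbdd : ∀ ω, |x ω| ≤ 1)
    (Y : (Fin m → Bool) → ℝ)
    (hY : ∀ ω, Y ω = μi * x ω + βi)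
    (τind : (Fin m → Bool) → ℝ)
    (hτind : ∀ ω, τind ω = 2 * Y ω * ((x ω - pexp D x) / pvar D x)) :
    pvar D τind ≤ 4 * μi ^ 2 * (1 / pvar D x - 1) := by
  set v := pvar D x
  have hτ : τind = fun ω => 2 * μi / v * x ω ^ 2 := by
    funext ω
    rw [hτind, hY, hβi, hmean]
    ring
  have hsq_le : ∀ ω, (x ω ^ 2) ^ 2 ≤ x ω ^ 2 := fun ω =>
    sq_le (sq_nonneg _) (sq_le_one_iff_abs_le_one _ |>.mpr (hbdd ω))
  have hsecond : pexp D (fun ω => x ω ^ 2) = v := (pvar_eq_pexp_sq_of_pexp_eq_zero D hmean).symm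
  calc pvar D τind = (2 * μi / v) ^ 2 * pvar D (fun ω => x ω ^ 2) := by
        rw [hτ, pvar_const_mul]
    _ ≤ (2 * μi / v) ^ 2 * (v * (1 - v)) := by
        rw [← hsecond]
        exact mul_le_mul_of_nonneg_left (pvar_le_pexp_mul_one_sub D hD0 hD1 hsq_le) (sq_nonneg _)
    _ = 4 * μi ^ 2 * (1 / v - 1) := by
        field_simp
        ring

/-- For a fixed `i` with zero intercept, mean-zero exposure, positive
exposure variance and `|x_i(z)| ≤ 1` for all `z`, the individual estimator satisfies
`Var(τ̂_i) ≤ 4 μ_i² (1/Var[x_i] − 1)`. -/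
theorem erl_individual_variance_bound_zero_intercept
    (n m : ℕ) (hn : 0 < n) (hm : 0 < m)
    (W : Matrix (Fin n) (Fin m) ℝ)
    (D : (Fin m → Bool) → ℝ) (hD0 : ∀ ω, 0 ≤ D ω) (hD1 : ∑ ω, D ω = 1)
    (i : Fin n) (μi βi : ℝ)
    (hβi : βi = 0)
    (x : (Fin m → Bool) → ℝ)
    (hx : ∀ ω, x ω = ∑ j, W i j * sgn (ω j))
    (hmean : pexp D x = 0)
    (hvar : 0 < pvar D x)
    (hbdd : ∀ ω, |x ω| ≤ 1)
    (Y : (Fin m → Bool) → ℝ)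
    (hY : ∀ ω, Y ω = μi * x ω + βi)
    (τind : (Fin m → Bool) → ℝ)
    (hτind : ∀ ω, τind ω = 2 * Y ω * ((x ω - pexp D x) / pvar D x)) :
    pvar D τind ≤ 4 * μi ^ 2 * (1 / pvar D x - 1) :=
  erl_individual_variance_bound_zero_intercept_general m D hD0 hD1 μi βi hβi x hmean hvar hbdd Y hY
    τind hτind
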